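/- Let ⟨N, M0⟩ be a marked Petri net with a basis partition π = (T_E, T_I). For every marking M and every firing sequence σ ∈ T* with M[σ⟩M_f, there exists a marking M_b reachable from M by a (possibly empty) sequence of minimal-explanation BRG-steps such that M_f ∈ R_I(M_b). (Equivalently: any firing sequence can be rearranged into the form σ_min,1 t_1 σ_min,2 t_2 ⋯ σ_min,k t_k σ', where each t_j ∈ T_E, each σ_min,j is a minimal explanation of t_j at the marking reached so far, and σ' ∈ T_I*, reaching the same marking M_f.) -/

import Mathlib

open scoped BigOperators

/-- A Petri net over places `P` and transitions `T`. -/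
structure PetriNet (P T : Type) where
  Pre : P → T → ℕ
  Post : P → T → ℕ

namespace PetriNet

variable {P T : Type}

/-- Incidence matrix `C = Post − Pre` (integer valued). -/
def C (N : PetriNet P T) (p : P) (t : T) : ℤ :=
  (N.Post p t : ℤ) - (N.Pre p t : ℤ)

/-- A transition `t` is enabled at marking `M`. -/
def Enabled (N : PetriNet P T) (M : P → ℕ) (t : T) : Prop :=
  ∀ p, N.Pre p t ≤ M p

/-- `Fires N M σ M'` means the sequence `σ` is enabled at `M` and its firing
yields `M'`, i.e. `M[σ⟩M'`. -/
inductive Fires (N : PetriNet P T) : (P → ℕ) → List T → (P → ℕ) → Prop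
  | nil (M : P → ℕ) : Fires N M [] M
  | cons {M M' M'' : P → ℕ} {t : T} {σ : List T} :
      N.Enabled M t →
      (∀ p, M' p = M p + N.Post p t - N.Pre p t) →
      Fires N M' σ M'' →
      Fires N M (t :: σ) M''

/-- The reachability set `R(N, M0)`. -/
def Reach (N : PetriNet P T) (M0 : P → ℕ) : Set (P → ℕ) :=
  {M | ∃ σ : List T, N.Fires M0 σ M}

/-- Arcs of the underlying directed graph on `P ⊕ T`, where only transitions
in `TI` are kept (the `TI`-induced subnet). -/
def Arc (N : PetriNet P T) (TI : Set T) : (P ⊕ T) → (P ⊕ T) → Prop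
  | Sum.inl p, Sum.inr t => t ∈ TI ∧ 0 < N.Pre p t
  | Sum.inr t, Sum.inl p => t ∈ TI ∧ 0 < N.Post p t
  | _, _ => False

/-- The `TI`-induced subnet is acyclic: no directed cycle in its graph. -/
def AcyclicOn (N : PetriNet P T) (TI : Set T) : Prop :=
  ∀ x, ¬ Relation.TransGen (N.Arc TI) x x

/-- `(TE, TI)` is a basis partition: `TE` and `TI` partition `T` and the
`TI`-induced subnet is acyclic. -/
def IsBasisPartition (N : PetriNet P T) (TE TI : Set T) : Prop :=
  (∀ t, t ∈ TE ↔ t ∉ TI) ∧ N.AcyclicOn TI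

/-- Boundedness of the marked net `⟨N, M0⟩`. -/
def Bounded (N : PetriNet P T) (M0 : P → ℕ) : Prop :=
  ∃ k : ℕ, ∀ M ∈ N.Reach M0, ∀ p, M p ≤ k

/-- A marking is dead if no transition is enabled at it. -/
def Dead (N : PetriNet P T) (M : P → ℕ) : Prop :=
  ∀ t : T, ¬ N.Enabled M t

/-- The set `Σ(M, t)` of explanations of `t` at `M`: implicit sequences whose
firing from `M` yields a marking enabling `t`. -/
def Expl (N : PetriNet P T) (TI : Set T) (M : P → ℕ) (t : T) : Set (List T) :=
  {σ | (∀ u ∈ σ, u ∈ TI) ∧ ∃ M', N.Fires M σ M' ∧ ∀ p, N.Pre p t ≤ M' p}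

/-- The set `Σ_min(M, t)` of minimal explanations of `t` at `M`. -/
def ExplMin [DecidableEq T] (N : PetriNet P T) (TI : Set T) (M : P → ℕ) (t : T) :
    Set (List T) :=
  {σ | σ ∈ N.Expl TI M t ∧
    ¬ ∃ σ' ∈ N.Expl TI M t,
      (∀ u, σ'.count u ≤ σ.count u) ∧ ∃ u, σ'.count u ≠ σ.count u}

/-- The set `Σ_max(M, t)` of maximal explanations of `t` at `M`. -/
def ExplMax [DecidableEq T] (N : PetriNet P T) (TI : Set T) (M : P → ℕ) (t : T) :
    Set (List T) :=
  {σ | σ ∈ N.Expl TI M t ∧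
    ¬ ∃ σ' ∈ N.Expl TI M t,
      (∀ u, σ.count u ≤ σ'.count u) ∧ ∃ u, σ'.count u ≠ σ.count u}

/-- `Y_min(M, t)`: firing vectors of minimal explanations. -/
def Ymin [DecidableEq T] (N : PetriNet P T) (TI : Set T) (M : P → ℕ) (t : T) :
    Set (T → ℕ) :=
  {y | ∃ σ ∈ N.ExplMin TI M t, ∀ u, σ.count u = y u}

/-- `Y_max(M, t)`: firing vectors of maximal explanations. -/
def Ymax [DecidableEq T] (N : PetriNet P T) (TI : Set T) (M : P → ℕ) (t : T) :
    Set (T → ℕ) :=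
  {y | ∃ σ ∈ N.ExplMax TI M t, ∀ u, σ.count u = y u}

/-- The set of basis markings `M_B` (smallest set containing `M0` and closed
under minimal-explanation steps). -/
inductive Basis [DecidableEq T] [Fintype T] (N : PetriNet P T) (TE TI : Set T)
    (M0 : P → ℕ) : (P → ℕ) → Prop
  | base : Basis N TE TI M0 M0
  | step {M M' : P → ℕ} {t : T} {y : T → ℕ} :
      Basis N TE TI M0 M →
      t ∈ TE →
      y ∈ N.Ymin TI M t →
      (∀ p, (M' p : ℤ) = (M p : ℤ) + (∑ u, N.C p u * y u) + N.C p t) →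
      Basis N TE TI M0 M'

/-- The set of minimax basis markings `M_BM` (smallest set containing `M0` and
closed under minimal- or maximal-explanation steps). -/
inductive Minimax [DecidableEq T] [Fintype T] (N : PetriNet P T) (TE TI : Set T)
    (M0 : P → ℕ) : (P → ℕ) → Prop
  | base : Minimax N TE TI M0 M0
  | step {M M' : P → ℕ} {t : T} {y : T → ℕ} :
      Minimax N TE TI M0 M →
      t ∈ TE →
      (y ∈ N.Ymin TI M t ∨ y ∈ N.Ymax TI M t) →
      (∀ p, (M' p : ℤ) = (M p : ℤ) + (∑ u, N.C p u * y u) + N.C p t) →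
      Minimax N TE TI M0 M'

/-- The implicit reach `R_I(M_b)`: markings reachable from `M_b` by firing
only implicit transitions. -/
def ReachI (N : PetriNet P T) (TI : Set T) (Mb : P → ℕ) : Set (P → ℕ) :=
  {M | ∃ σ : List T, (∀ u ∈ σ, u ∈ TI) ∧ N.Fires Mb σ M}

/-- One step of the minimax-BRG: `M1 ⇒ M2`. -/
def BrgStep [DecidableEq T] [Fintype T] (N : PetriNet P T) (TE TI : Set T)
    (M1 M2 : P → ℕ) : Prop :=
  ∃ t ∈ TE, ∃ y : T → ℕ, (y ∈ N.Ymin TI M1 t ∨ y ∈ N.Ymax TI M1 t) ∧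
    ∀ p, (M2 p : ℤ) = (M1 p : ℤ) + (∑ u, N.C p u * y u) + N.C p t

/-- One step of the BRG using only minimal explanations. -/
def MinBrgStep [DecidableEq T] [Fintype T] (N : PetriNet P T) (TE TI : Set T)
    (M1 M2 : P → ℕ) : Prop :=
  ∃ t ∈ TE, ∃ y ∈ N.Ymin TI M1 t,
    ∀ p, (M2 p : ℤ) = (M1 p : ℤ) + (∑ u, N.C p u * y u) + N.C p t

/-- The minimax-BRG is unobstructed: every minimax basis marking can reach, by
BRG-steps, an i-coreachable minimax basis marking. -/
def Unobstructed [DecidableEq T] [Fintype T] (N : PetriNet P T) (TE TI : Set T)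
    (M0 : P → ℕ) (MF : Set (P → ℕ)) : Prop :=
  ∀ Mb, N.Minimax TE TI M0 Mb →
    ∃ Mb', Relation.ReflTransGen (N.BrgStep TE TI) Mb Mb' ∧
      N.Minimax TE TI M0 Mb' ∧ (N.ReachI TI Mb' ∩ MF).Nonempty

/-- `Σ_I,max(M)`: maximal implicit firing sequences at `M`. -/
def ImplMax [DecidableEq T] (N : PetriNet P T) (TI : Set T) (M : P → ℕ) :
    Set (List T) :=
  {σ | (∀ u ∈ σ, u ∈ TI) ∧ (∃ M', N.Fires M σ M') ∧
    ¬ ∃ σ' : List T, (∀ u ∈ σ', u ∈ TI) ∧ (∃ M', N.Fires M σ' M') ∧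
      (∀ u, σ.count u ≤ σ'.count u) ∧ ∃ u, σ'.count u ≠ σ.count u}

/-- `Y_I,max(M)`: firing vectors of maximal implicit firing sequences. -/
def YImax [DecidableEq T] (N : PetriNet P T) (TI : Set T) (M : P → ℕ) :
    Set (T → ℕ) :=
  {y | ∃ σ ∈ N.ImplMax TI M, ∀ u, σ.count u = y u}

end PetriNet

/-!
Scan the firing sequence from the left, keeping the implicit transitions fired so far as a
pending prefix `σI`. When an explicit transition `t` is met, `σI` is an explanation of `t`,
so it dominates (in Parikh order) some minimal explanation `σm`; take the BRG-step with
`σm` and `t`. The marking reached by `σI t` differs from the one reached by `σm t` by the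
effect of the residual vector `φ(σI) - φ(σm)`, which is supported on implicit transitions,
and in an acyclic subnet the state equation alone guarantees that such a vector can be
fired. The realisation becomes the new pending prefix.
-/

namespace PetriNet

variable {P T : Type} {N : PetriNet P T}

theorem Fires.append {M M' M'' : P → ℕ} {σ τ : List T}
    (h : N.Fires M σ M') (h' : N.Fires M' τ M'') : N.Fires M (σ ++ τ) M'' := by
  induction h with
  | nil => exact h'
  | cons hen hM _ ih => exact .cons hen hM (ih h')

theorem Fires.of_append {M M'' : P → ℕ} {σ τ : List T} (h : N.Fires M (σ ++ τ) M'') :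
    ∃ M', N.Fires M σ M' ∧ N.Fires M' τ M'' := by
  induction σ generalizing M with
  | nil => exact ⟨M, .nil M, h⟩
  | cons t σ ih =>
    cases h with
    | cons hen hM h =>
      obtain ⟨M', hσ, hτ⟩ := ih h
      exact ⟨M', .cons hen hM hσ, hτ⟩

theorem Enabled.natCast_fire {M : P → ℕ} {t : T} (hen : N.Enabled M t) (p : P) :
    ((M p + N.Post p t - N.Pre p t : ℕ) : ℤ) = M p + N.C p t := by
  rw [Nat.cast_sub ((hen p).trans (Nat.le_add_right _ _)), C]
  push_cast
  ring

section Parikh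

variable [DecidableEq T]

/-- The Parikh (firing) vector `φ(σ)` of a sequence of transitions. -/
def parikh (σ : List T) : T → ℕ := fun u => σ.count u

@[simp]
theorem parikh_nil : parikh ([] : List T) = 0 := rfl

theorem parikh_cons (t : T) (σ : List T) : parikh (t :: σ) = Pi.single t 1 + parikh σ := by
  ext u
  by_cases hu : u = t
  · subst hu; simp [parikh, add_comm]
  · simp [parikh, hu, Ne.symm hu]

end Parikh

section Effect

variable [Fintype T]

/-- The change of marking `C · y` caused by firing each transition `u` exactly `y u` times. -/
def effect (N : PetriNet P T) : (T → ℕ) →+ (P → ℤ) where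
  toFun y p := ∑ u, N.C p u * y u
  map_zero' := by ext; simp
  map_add' y z := by ext p; simp [mul_add, Finset.sum_add_distrib]

theorem effect_apply (y : T → ℕ) (p : P) : N.effect y p = ∑ u, N.C p u * y u := rfl

theorem effect_tsub {y z : T → ℕ} (h : z ≤ y) : N.effect (y - z) = N.effect y - N.effect z :=
  eq_sub_of_add_eq (by rw [← map_add, tsub_add_cancel_of_le h])

theorem effect_le_of_post_eq_zero {y : T → ℕ} {p : P}
    (hpost : ∀ u, y u ≠ 0 → N.Post p u = 0) (t : T) :
    N.effect y p ≤ -(N.Pre p t * y t : ℤ) := by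
  have hterm : ∀ u, N.C p u * y u = -(N.Pre p u * y u : ℤ) := fun u => by
    by_cases hu : y u = 0
    · simp [hu]
    · simp [C, hpost u hu]
  rw [effect_apply, Finset.sum_congr rfl fun u _ => hterm u, Finset.sum_neg_distrib, neg_le_neg_iff]
  exact Finset.single_le_sum (f := fun u => (N.Pre p u * y u : ℤ)) (fun u _ => by positivity)
    (Finset.mem_univ t)

variable [DecidableEq T]

theorem effect_single (t : T) (p : P) : N.effect (Pi.single t 1) p = N.C p t := by
  simp [effect_apply, Pi.single_apply]

theorem Fires.state_equation {M M' : P → ℕ} {σ : List T} (h : N.Fires M σ M') (p : P) :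
    (M' p : ℤ) = M p + N.effect (parikh σ) p := by
  induction h with
  | nil => simp
  | cons hen hM _ ih =>
    rw [ih, hM, hen.natCast_fire, parikh_cons, map_add, Pi.add_apply, effect_single]
    ring

end Effect

/-- Take `t` minimal in the support of `y` for the order "`u` produces into an input place
of `t`": no transition of the support feeds the input places of `t`, so a token missing there
could never be made up and `M + C · y` would be negative. -/
theorem AcyclicOn.exists_enabled [Fintype T] {TI : Set T} (hac : N.AcyclicOn TI)
    {y : T → ℕ} (hy : y ≠ 0) (hyI : ∀ u, y u ≠ 0 → u ∈ TI) {M M' : P → ℕ}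
    (heq : ∀ p, (M' p : ℤ) = M p + N.effect y p) : ∃ t, y t ≠ 0 ∧ N.Enabled M t := by
  let R : T → T → Prop := fun u t => Relation.TransGen (N.Arc TI) (.inr u) (.inr t)
  have : IsTrans T R := ⟨fun _ _ _ h h' => h.trans h'⟩
  have : Std.Irrefl R := ⟨fun t h => hac (.inr t) h⟩
  obtain ⟨t, ht, hmin⟩ := (Finite.wellFounded_of_trans_of_irrefl R).has_min {t | y t ≠ 0}
    (Function.ne_iff.mp hy)
  refine ⟨t, ht, fun p => ?_⟩
  by_contra! hlt
  have hpost : ∀ u, y u ≠ 0 → N.Post p u = 0 := fun u hu => by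
    by_contra hpos
    exact hmin u hu <|
      .head (show N.Arc TI (.inr u) (.inl p) from ⟨hyI u hu, Nat.pos_of_ne_zero hpos⟩)
      (.single (show N.Arc TI (.inl p) (.inr t) from ⟨hyI t ht, by omega⟩))
  have hyt : (1 : ℤ) ≤ y t := by exact_mod_cast Nat.one_le_iff_ne_zero.mpr ht
  have hle := effect_le_of_post_eq_zero hpost t
  have hM' := heq p
  have : (M p : ℤ) < N.Pre p t := by exact_mod_cast hlt
  nlinarith [(M' p).cast_nonneg (α := ℤ), (N.Pre p t).cast_nonneg (α := ℤ)]

theorem AcyclicOn.mem_reachI_of_state_equation [Fintype T] [DecidableEq T] {TI : Set T}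
    (hac : N.AcyclicOn TI) {y : T → ℕ} (hyI : ∀ u, y u ≠ 0 → u ∈ TI) {M M' : P → ℕ}
    (heq : ∀ p, (M' p : ℤ) = M p + N.effect y p) : M' ∈ N.ReachI TI M := by
  induction hn : ∑ u, y u generalizing y M with
  | zero =>
    obtain rfl : y = 0 := funext fun u => Finset.sum_eq_zero_iff.mp hn u (Finset.mem_univ u)
    obtain rfl : M' = M := funext fun p => by simpa using heq p
    exact ⟨[], by simp, .nil M'⟩
  | succ n ih =>
    obtain ⟨t, ht, hen⟩ := hac.exists_enabled (by rintro rfl; simp at hn) hyI heq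
    have hle : Pi.single t 1 ≤ y := fun u => by
      rcases eq_or_ne u t with rfl | hu
      · simpa using Nat.one_le_iff_ne_zero.mpr ht
      · simp [hu]
    obtain ⟨z, rfl⟩ := exists_add_of_le hle
    obtain ⟨τ, hτI, hτ⟩ := ih (y := z) (fun u hu => hyI u (by simp [hu]))
      (M := fun p => M p + N.Post p t - N.Pre p t)
      (fun p => by rw [heq, hen.natCast_fire, map_add, Pi.add_apply, effect_single]; ring)
      (by simpa [Finset.sum_add_distrib, add_comm] using hn)
    exact ⟨t :: τ, by simpa [hyI t ht] using hτI, .cons hen (fun _ => rfl) hτ⟩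

theorem exists_explMin_parikh_le [Fintype T] [DecidableEq T] {TI : Set T} {M : P → ℕ} {t : T}
    {σ : List T} (hσ : σ ∈ N.Expl TI M t) :
    ∃ σm ∈ N.ExplMin TI M t, parikh σm ≤ parikh σ := by
  obtain ⟨σm, ⟨hσm, hle⟩, hmin⟩ := exists_minimalFor_of_wellFoundedLT
    (fun l => l ∈ N.Expl TI M t ∧ parikh l ≤ parikh σ) parikh ⟨σ, hσ, le_rfl⟩
  refine ⟨σm, ⟨hσm, ?_⟩, hle⟩
  rintro ⟨σ', hσ', hle', u, hne⟩
  exact hne (congrFun (le_antisymm (show parikh σ' ≤ parikh σm from hle')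
    (hmin ⟨hσ', le_trans hle' hle⟩ hle')) u)

theorem exists_minBrgStep_mem_reachI [Fintype T] [DecidableEq T] {TE TI : Set T}
    (hac : N.AcyclicOn TI) {t : T} (htE : t ∈ TE) {σI : List T} (hσI : ∀ u ∈ σI, u ∈ TI)
    {M M₁ M' : P → ℕ} (hM₁ : N.Fires M σI M₁) (hen : N.Enabled M₁ t)
    (hM' : ∀ p, M' p = M₁ p + N.Post p t - N.Pre p t) :
    ∃ M₂, N.MinBrgStep TE TI M M₂ ∧ M' ∈ N.ReachI TI M₂ := by
  obtain ⟨σm, hσm, hle⟩ := exists_explMin_parikh_le ⟨hσI, M₁, hM₁, hen⟩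
  obtain ⟨-, M₃, hM₃, hpre⟩ := hσm.1
  have hM₂ : ∀ p, ((M₃ p + N.Post p t - N.Pre p t : ℕ) : ℤ)
      = M p + N.effect (parikh σm) p + N.C p t := fun p => by
    rw [Enabled.natCast_fire hpre, hM₃.state_equation]
  refine ⟨_, ⟨t, htE, parikh σm, ⟨σm, hσm, fun _ => rfl⟩, hM₂⟩,
    hac.mem_reachI_of_state_equation (y := parikh σI - parikh σm) (fun u hu => ?_) fun p => ?_⟩
  · exact hσI u (List.count_pos_iff.mp (Nat.pos_of_ne_zero fun h => hu (by simp [parikh, h])))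
  · rw [hM', hen.natCast_fire, hM₁.state_equation, hM₂, effect_tsub hle, Pi.sub_apply]
    ring

theorem exists_reflTransGen_minBrgStep_of_fires [Fintype T] [DecidableEq T] {TE TI : Set T}
    (hbp : N.IsBasisPartition TE TI) {σI σ : List T} (hσI : ∀ u ∈ σI, u ∈ TI)
    {M Mf : P → ℕ} (h : N.Fires M (σI ++ σ) Mf) :
    ∃ Mb, Relation.ReflTransGen (N.MinBrgStep TE TI) M Mb ∧ Mf ∈ N.ReachI TI Mb := by
  induction σ generalizing σI M with
  | nil => exact ⟨M, .refl, σI, hσI, by simpa using h⟩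
  | cons t σ ih =>
    by_cases ht : t ∈ TI
    · exact ih (σI := σI ++ [t]) (by simpa [or_imp, forall_and] using ⟨hσI, ht⟩)
        (by simpa using h)
    · obtain ⟨M₁, hM₁, hrest⟩ := h.of_append
      cases hrest with
      | cons hen hM' hσ =>
        obtain ⟨M₂, hstep, τ, hτI, hτ⟩ :=
          exists_minBrgStep_mem_reachI hbp.2 ((hbp.1 t).2 ht) hσI hM₁ hen hM'
        obtain ⟨Mb, hMb, hMf⟩ := ih hτI (hτ.append hσ)
        exact ⟨Mb, .head hstep hMb, hMf⟩

end PetriNet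

open PetriNet in
theorem statement15_general {P T : Type} [Fintype T] [DecidableEq T]
    (N : PetriNet P T) (TE TI : Set T)
    (hbp : N.IsBasisPartition TE TI)
    (M Mf : P → ℕ) (σ : List T) (h : N.Fires M σ Mf) :
    ∃ Mb : P → ℕ, Relation.ReflTransGen (N.MinBrgStep TE TI) M Mb ∧
      Mf ∈ N.ReachI TI Mb :=
  exists_reflTransGen_minBrgStep_of_fires hbp (σI := []) (by simp) h

open PetriNet in
/-- Any firing sequence `M[σ⟩M_f` can be rearranged so that
`M_f` lies in the implicit reach of a marking obtained from `M` by a sequence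
of minimal-explanation BRG-steps. -/
theorem statement15 {P T : Type} [Fintype T] [DecidableEq T]
    (N : PetriNet P T) (M0 : P → ℕ) (TE TI : Set T)
    (hbp : N.IsBasisPartition TE TI)
    (M Mf : P → ℕ) (σ : List T) (h : N.Fires M σ Mf) :
    ∃ Mb : P → ℕ, Relation.ReflTransGen (N.MinBrgStep TE TI) M Mb ∧
      Mf ∈ N.ReachI TI Mb :=
  statement15_general N TE TI hbp M Mf σ h
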